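/- Let d ≥ 3 be an odd integer and let G be the multigraph on 6 vertices with adjacency matrix [[0, (d+1)/2, (d−1)/2, 0, 0, 0], [(d+1)/2, 0, (d−1)/2, 0, 0, 0], [(d−1)/2, (d−1)/2, 0, 1, 0, 0], [0, 0, 1, 0, (d−1)/2, (d−1)/2], [0, 0, 0, (d−1)/2, 0, (d+1)/2], [0, 0, 0, (d−1)/2, (d+1)/2, 0]]. Then G is a d-regular multigraph with edge-connectivity κ'(G) = 1, and its second-largest eigenvalue satisfies λ2(G) = (d − 1 + √(9d² − 10d + 17))/4 = ρ(d,6). -/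

import Mathlib

open Matrix Finset BigOperators

/-- Ascending list of the real roots (with multiplicity) of the characteristic
polynomial of a square real matrix.  For a matrix all of whose eigenvalues are
real, this is the list of eigenvalues in increasing order. -/
noncomputable def eigList {n : ℕ} (A : Matrix (Fin n) (Fin n) ℝ) : List ℝ :=
  A.charpoly.roots.sort (· ≤ ·)

/-- The second-largest eigenvalue (counted with multiplicity) of a square real
matrix with real spectrum. -/
noncomputable def lambda2 {n : ℕ} (A : Matrix (Fin n) (Fin n) ℝ) : ℝ :=
  (eigList A).getD (n - 2) 0

/-- The underlying simple graph of a multigraph given by its adjacency matrix: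
two distinct vertices are adjacent iff they are joined by at least one edge. -/
def toSimple {n : ℕ} (A : Matrix (Fin n) (Fin n) ℕ) : SimpleGraph (Fin n) :=
  SimpleGraph.fromRel (fun i j => 0 < A i j)

/-- Vertex connectivity of a multigraph: the least size of a set of vertices
whose deletion disconnects the graph or reduces it to a single vertex. -/
noncomputable def kappa {n : ℕ} (A : Matrix (Fin n) (Fin n) ℕ) : ℕ :=
  sInf {k | ∃ S : Finset (Fin n), S.card = k ∧
    (¬ ((toSimple A).induce (↑(Sᶜ) : Set (Fin n))).Connected ∨ (Sᶜ).card = 1)}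

/-- Vertex connectivity of a simple graph: the least size of a set of vertices
whose deletion disconnects the graph or reduces it to a single vertex. -/
noncomputable def kappaG {n : ℕ} (G : SimpleGraph (Fin n)) : ℕ :=
  sInf {k | ∃ S : Finset (Fin n), S.card = k ∧
    (¬ (G.induce (↑(Sᶜ) : Set (Fin n))).Connected ∨ (Sᶜ).card = 1)}

/-- Edge connectivity of a multigraph: the least number of edges (counted with
multiplicity) whose deletion disconnects the graph.  A deleted edge multiset is
encoded by a symmetric matrix `B ≤ A`; it has `k` edges when `∑ᵢⱼ Bᵢⱼ = 2k`. -/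
noncomputable def edgeConn {n : ℕ} (A : Matrix (Fin n) (Fin n) ℕ) : ℕ :=
  sInf {k | ∃ B : Matrix (Fin n) (Fin n) ℕ,
    (∀ i j, B i j ≤ A i j) ∧ (∀ i j, B i j = B j i) ∧
    (∑ i, ∑ j, B i j) = 2 * k ∧ ¬ (toSimple (A - B)).Connected}

/-- The quotient matrix `Q(d,n)` from the paper. -/
noncomputable def Qmat (d n : ℝ) : Matrix (Fin 4) (Fin 4) ℝ :=
  !![(d+1)/2, (d-1)/2, 0, 0;
     d-1, 0, 1, 0;
     0, 1, 0, d-1;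
     0, 0, (d-1)/(n-4), d-(d-1)/(n-4)]

/-- `ρ(d,n)`: the second-largest eigenvalue of `Q(d,n)`. -/
noncomputable def rho (d n : ℝ) : ℝ := lambda2 (Qmat d n)

/-- Delete one copy of the edge joining `u` and `v` from a multigraph. -/
def deleteEdge {n : ℕ} (A : Matrix (Fin n) (Fin n) ℕ) (u v : Fin n) :
    Matrix (Fin n) (Fin n) ℕ :=
  Matrix.of fun i j => A i j - (if (i = u ∧ j = v) ∨ (i = v ∧ j = u) then 1 else 0)

/-!
Both characteristic polynomials are computed by cofactor expansion. Writing
`s = √(9d² - 10d + 17)`, the quotient matrix `Q(d,6)` of the equitable partition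
`{0,1}, {2}, {3}, {4,5}` has the eigenvalues `(d-1-s)/4 ≤ (3-d)/2 ≤ (d-1+s)/4 ≤ d`, and the
adjacency matrix has in addition the eigenvalue `-(d+1)/2` twice (eigenvectors antisymmetric on
`{0,1}` or on `{4,5}`), so in both cases the second largest is `(d-1+s)/4`. The single edge
`2 – 3` is a bridge, which gives edge-connectivity `1`.
-/

open Polynomial

lemma eigList_eq_of_charpoly_eq_prod {n : ℕ} {A : Matrix (Fin n) (Fin n) ℝ} {l : List ℝ}
    (hA : A.charpoly = (l.map fun a => X - C a).prod) (hl : l.Pairwise (· ≤ ·)) :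
    eigList A = l := by
  have hroots : A.charpoly.roots = l := by
    rw [hA, ← Multiset.prod_coe, ← Multiset.map_coe, roots_multiset_prod_X_sub_C]
  rw [eigList, hroots, Multiset.coe_sort, List.mergeSort_eq_self _ hl]

lemma X_sq_sub_C_mul_X_sub_C_eq {R : Type*} [CommRing R] {r₁ r₂ b c : R}
    (hsum : r₁ + r₂ = b) (hprod : r₁ * r₂ = -c) :
    X ^ 2 - C b * X - C c = (X - C r₁) * (X - C r₂) := by
  rw [← hsum, ← neg_neg c, ← hprod]
  simp only [map_add, map_mul, map_neg]
  ring

lemma toSimple_adj {n : ℕ} {A : Matrix (Fin n) (Fin n) ℕ} {i j : Fin n} :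
    (toSimple A).Adj i j ↔ i ≠ j ∧ (0 < A i j ∨ 0 < A j i) :=
  SimpleGraph.fromRel_adj _ _ _

lemma not_connected_of_adj_closed {V : Type*} {G : SimpleGraph V} (S : Set V)
    (hS : ∀ x y, G.Adj x y → x ∈ S → y ∈ S) {a b : V} (ha : a ∈ S) (hb : b ∉ S) :
    ¬ G.Connected := fun hG => by
  obtain ⟨p⟩ := hG.preconnected a b
  obtain ⟨e, -, he, he'⟩ := p.exists_boundary_dart S ha hb
  exact he' (hS _ _ e.adj he)

lemma edgeConn_eq_one_of_bridge {n : ℕ} {A : Matrix (Fin n) (Fin n) ℕ} (hA : A.IsSymm)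
    {u v : Fin n} (huv : u ≠ v) (hpos : 0 < A u v) (hconn : (toSimple A).Connected)
    (hbridge : ¬ (toSimple (deleteEdge A u v)).Connected) :
    edgeConn A = 1 := by
  set B : Matrix (Fin n) (Fin n) ℕ :=
    Matrix.of fun i j => if (i = u ∧ j = v) ∨ (i = v ∧ j = u) then 1 else 0
  have hBA : ∀ i j, B i j ≤ A i j := by
    intro i j
    simp only [B, Matrix.of_apply]
    split_ifs with h
    · rcases h with ⟨rfl, rfl⟩ | ⟨rfl, rfl⟩
      · exact hpos
      · rwa [hA.apply]
    · exact Nat.zero_le _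
  have hBsymm : ∀ i j, B i j = B j i := fun i j => if_congr (by tauto) rfl rfl
  have hBsum : ∑ i, ∑ j, B i j = 2 * 1 := by
    have hsplit : ∀ i j, B i j =
        (if i = u ∧ j = v then 1 else 0) + (if i = v ∧ j = u then 1 else 0) := by
      intro i j
      simp only [B, Matrix.of_apply]
      split_ifs <;> simp_all
    simp [hsplit, Finset.sum_add_distrib, ite_and]
  have hdel : A - B = deleteEdge A u v := rfl
  refine le_antisymm (Nat.sInf_le ⟨B, hBA, hBsymm, hBsum, hdel ▸ hbridge⟩) ?_
  refine Nat.one_le_iff_ne_zero.mpr fun h0 => ?_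
  rcases Nat.sInf_eq_zero.mp h0 with ⟨B', -, -, hsum, hdisc⟩ | hempty
  · have hB' : B' = 0 := by
      ext i j
      simpa using Finset.sum_eq_zero_iff.mp (Finset.sum_eq_zero_iff.mp hsum i (mem_univ i)) j
        (mem_univ j)
    have hsub : A - B' = A := by ext i j; simp [hB']
    exact hdisc (by rwa [hsub])
  · exact (hempty ▸ Set.notMem_empty 1) ⟨B, hBA, hBsymm, hBsum, hdel ▸ hbridge⟩

def bridgedTriangles {R : Type*} [Zero R] [One R] (a b : R) : Matrix (Fin 6) (Fin 6) R :=
  !![0, a, b, 0, 0, 0;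
     a, 0, b, 0, 0, 0;
     b, b, 0, 1, 0, 0;
     0, 0, 1, 0, b, b;
     0, 0, 0, b, 0, a;
     0, 0, 0, b, a, 0]

section bridgedTriangles

variable {R : Type*}

lemma isSymm_bridgedTriangles [Zero R] [One R] (a b : R) : (bridgedTriangles a b).IsSymm := by
  ext i j
  fin_cases i <;> fin_cases j <;> rfl

lemma map_bridgedTriangles {S : Type*} [Zero R] [One R] [Zero S] [One S] (f : R → S)
    (h0 : f 0 = 0) (h1 : f 1 = 1) (a b : R) :
    (bridgedTriangles a b).map f = bridgedTriangles (f a) (f b) := by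
  ext i j
  fin_cases i <;> fin_cases j <;> simp [bridgedTriangles, h0, h1]

lemma sum_bridgedTriangles_row [NonAssocSemiring R] (b : R) (i : Fin 6) :
    ∑ j, bridgedTriangles (b + 1) b i j = 2 * b + 1 := by
  fin_cases i <;> simp [bridgedTriangles, Fin.sum_univ_succ, two_mul] <;> abel

lemma connected_toSimple_bridgedTriangles {a b : ℕ} (ha : 0 < a) (hb : 0 < b) :
    (toSimple (bridgedTriangles a b)).Connected := by
  have adj : ∀ i j : Fin 6, i ≠ j → 0 < bridgedTriangles a b i j →
      (toSimple (bridgedTriangles a b)).Reachable i j :=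
    fun i j hij hpos => (toSimple_adj.mpr ⟨hij, Or.inl hpos⟩).reachable
  have r01 := adj 0 1 (by decide) ha
  have r02 := adj 0 2 (by decide) hb
  have r23 := adj 2 3 (by decide) Nat.one_pos
  have r34 := adj 3 4 (by decide) hb
  have r45 := adj 4 5 (by decide) ha
  refine (SimpleGraph.connected_iff_exists_forall_reachable _).mpr ⟨0, fun v => ?_⟩
  fin_cases v
  exacts [.rfl, r01, r02, r02.trans r23, (r02.trans r23).trans r34,
    ((r02.trans r23).trans r34).trans r45]

lemma not_connected_toSimple_deleteEdge_bridgedTriangles (a b : ℕ) :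
    ¬ (toSimple (deleteEdge (bridgedTriangles a b) 2 3)).Connected := by
  refine not_connected_of_adj_closed {i | i.val ≤ 2} (fun x y hxy hx => ?_)
    (a := 0) (b := 3) (by decide) (by decide)
  rw [toSimple_adj] at hxy
  fin_cases x <;> fin_cases y <;> simp_all [deleteEdge, bridgedTriangles]

lemma edgeConn_bridgedTriangles {a b : ℕ} (ha : 0 < a) (hb : 0 < b) :
    edgeConn (bridgedTriangles a b) = 1 :=
  edgeConn_eq_one_of_bridge (u := 2) (v := 3) (isSymm_bridgedTriangles a b) (by decide)
    Nat.one_pos (connected_toSimple_bridgedTriangles ha hb)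
    (not_connected_toSimple_deleteEdge_bridgedTriangles a b)

end bridgedTriangles

set_option maxHeartbeats 1000000 in
lemma charpoly_bridgedTriangles (d : ℝ) :
    (bridgedTriangles ((d + 1) / 2) ((d - 1) / 2)).charpoly =
      (X - C d) * (X - C ((3 - d) / 2)) * (X + C ((d + 1) / 2)) ^ 2 *
        (X ^ 2 - C ((d - 1) / 2) * X - C ((d ^ 2 - d + 2) / 2)) := by
  apply Polynomial.funext
  intro r
  rw [Matrix.charpoly, ← Polynomial.coe_evalRingHom, RingHom.map_det]
  simp [Matrix.det_succ_row_zero, Fin.sum_univ_succ, bridgedTriangles, Fin.succAbove]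
  ring

lemma charpoly_Qmat_six (d : ℝ) :
    (Qmat d 6).charpoly = (X - C d) * (X - C ((3 - d) / 2)) *
      (X ^ 2 - C ((d - 1) / 2) * X - C ((d ^ 2 - d + 2) / 2)) := by
  apply Polynomial.funext
  intro r
  rw [Matrix.charpoly, ← Polynomial.coe_evalRingHom, RingHom.map_det]
  simp [Matrix.det_succ_row_zero, Fin.sum_univ_succ, Qmat, Fin.succAbove]
  ring

section spectrum

variable {d s : ℝ}

lemma quadratic_eq_mul_of_sq_eq (hs : s ^ 2 = 9 * d ^ 2 - 10 * d + 17) :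
    (X ^ 2 - C ((d - 1) / 2) * X - C ((d ^ 2 - d + 2) / 2) : ℝ[X]) =
      (X - C ((d - 1 - s) / 4)) * (X - C ((d - 1 + s) / 4)) :=
  X_sq_sub_C_mul_X_sub_C_eq (by ring) (by linear_combination (-1 / 16 : ℝ) * hs)

lemma pairwise_le_spectrum (hd : 1 ≤ d) (hs₀ : 0 ≤ s) (hs : s ^ 2 = 9 * d ^ 2 - 10 * d + 17) :
    [-((d + 1) / 2), -((d + 1) / 2), (d - 1 - s) / 4, (3 - d) / 2, (d - 1 + s) / 4, d].Pairwise
      (· ≤ ·) := by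
  have hs_le : s ≤ 3 * d + 1 := by nlinarith
  have habs : |3 * d - 7| ≤ s := abs_le_of_sq_le_sq (by nlinarith) hs₀
  obtain ⟨le_hs, le_hs'⟩ := abs_le.mp habs
  simp only [List.pairwise_cons, List.forall_mem_cons, List.not_mem_nil, IsEmpty.forall_iff,
    implies_true, and_true, List.Pairwise.nil]
  and_intros <;> linarith

lemma eigList_bridgedTriangles (hd : 1 ≤ d) (hs₀ : 0 ≤ s)
    (hs : s ^ 2 = 9 * d ^ 2 - 10 * d + 17) :
    eigList (bridgedTriangles ((d + 1) / 2) ((d - 1) / 2)) =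
      [-((d + 1) / 2), -((d + 1) / 2), (d - 1 - s) / 4, (3 - d) / 2, (d - 1 + s) / 4, d] := by
  refine eigList_eq_of_charpoly_eq_prod ?_ (pairwise_le_spectrum hd hs₀ hs)
  rw [charpoly_bridgedTriangles, quadratic_eq_mul_of_sq_eq hs]
  simp only [List.map_cons, List.map_nil, List.prod_cons, List.prod_nil, map_neg, sub_neg_eq_add]
  ring

lemma eigList_Qmat_six (hd : 1 ≤ d) (hs₀ : 0 ≤ s) (hs : s ^ 2 = 9 * d ^ 2 - 10 * d + 17) :
    eigList (Qmat d 6) = [(d - 1 - s) / 4, (3 - d) / 2, (d - 1 + s) / 4, d] := by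
  refine eigList_eq_of_charpoly_eq_prod ?_
    ((pairwise_le_spectrum hd hs₀ hs).drop (i := 2))
  rw [charpoly_Qmat_six, quadratic_eq_mul_of_sq_eq hs]
  simp only [List.map_cons, List.map_nil, List.prod_cons, List.prod_nil]
  ring

end spectrum

/-- for odd d ≥ 3, the given 6-vertex multigraph is d-regular,
has edge-connectivity 1, and its second-largest eigenvalue equals
(d − 1 + √(9d² − 10d + 17))/4 = ρ(d,6). -/
theorem stmt10 (d : ℕ) (hd : 3 ≤ d) (hodd : Odd d)
    (A : Matrix (Fin 6) (Fin 6) ℕ)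
    (hA : A = !![0, (d+1)/2, (d-1)/2, 0, 0, 0;
                 (d+1)/2, 0, (d-1)/2, 0, 0, 0;
                 (d-1)/2, (d-1)/2, 0, 1, 0, 0;
                 0, 0, 1, 0, (d-1)/2, (d-1)/2;
                 0, 0, 0, (d-1)/2, 0, (d+1)/2;
                 0, 0, 0, (d-1)/2, (d+1)/2, 0]) :
    (∀ i, ∑ j, A i j = d) ∧
    edgeConn A = 1 ∧
    lambda2 (A.map (fun x => (x : ℝ))) =
      ((d : ℝ) - 1 + Real.sqrt (9 * (d : ℝ) ^ 2 - 10 * (d : ℝ) + 17)) / 4 ∧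
    ((d : ℝ) - 1 + Real.sqrt (9 * (d : ℝ) ^ 2 - 10 * (d : ℝ) + 17)) / 4 =
      rho (d : ℝ) 6 := by
  obtain ⟨k, rfl⟩ := hodd
  rw [show (2 * k + 1 + 1) / 2 = k + 1 by omega, show (2 * k + 1 - 1) / 2 = k by omega] at hA
  change A = bridgedTriangles (k + 1) k at hA
  subst hA
  have hd₁ : (1 : ℝ) ≤ (2 * k + 1 : ℕ) := by exact_mod_cast by omega
  have hrad : 0 ≤ 9 * ((2 * k + 1 : ℕ) : ℝ) ^ 2 - 10 * (2 * k + 1 : ℕ) + 17 := by nlinarith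
  have hmap : (bridgedTriangles (k + 1) k).map (fun x => (x : ℝ)) =
      bridgedTriangles ((((2 * k + 1 : ℕ) : ℝ) + 1) / 2)
        ((((2 * k + 1 : ℕ) : ℝ) - 1) / 2) := by
    rw [map_bridgedTriangles _ Nat.cast_zero Nat.cast_one]
    congr 1 <;> push_cast <;> ring
  refine ⟨sum_bridgedTriangles_row k, edgeConn_bridgedTriangles k.succ_pos (by omega), ?_, ?_⟩
  · rw [lambda2, hmap, eigList_bridgedTriangles hd₁ (Real.sqrt_nonneg _) (Real.sq_sqrt hrad)]
    rfl
  · rw [rho, lambda2, eigList_Qmat_six hd₁ (Real.sqrt_nonneg _) (Real.sq_sqrt hrad)]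
    rfl
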